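/- arXiv:0910.1534 — 2 statements merged into one kernel-verified Lean document; each statement's English description precedes it below -/
import Mathlib

section
/- Unconditionally (without assuming the Riemann Hypothesis), there exists a constant C > 0 such that |c_k| ≤ C · k^(-1/2) for all integers k ≥ 1. -/
/-!
Expanding `1/ζ(2j+2) = ∑ₙ μ(n) n^(-2j-2)` and summing over `j` first by the binomial theorem gives
`c_k = ∑ₙ μ(n) n⁻² (1 - n⁻²)^k`. Since `(1 - x)^k ≤ e^(-kx) ≤ 1/(1 + kx)`, the `n`-th term is at
most `1/(n² + k)` in absolute value. Finally `1/(n² + k) ≤ 2/((n + √k)² - 1/4)`, and the right-hand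
side telescopes: its sum over `n ≥ 0` is `2/(√k - 1/2) ≤ 4/√k`.
-/

open Finset

/-- The Báez-Duarte sequence `c_k = ∑_{j=0}^{k} (-1)^j C(k,j) / ζ(2j+2)`. -/
noncomputable def baezDuarteC (k : ℕ) : ℂ :=
  ∑ j ∈ Finset.range (k + 1), (-1) ^ j * (k.choose j : ℂ) / riemannZeta (2 * j + 2)

open ArithmeticFunction Filter
open scoped ArithmeticFunction.Moebius

noncomputable def baezDuarteTerm (k n : ℕ) : ℝ :=
  μ n * ((n : ℝ) ^ 2)⁻¹ * (1 - ((n : ℝ) ^ 2)⁻¹) ^ k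

lemma sum_range_neg_one_pow_mul_choose_mul_pow {R : Type*} [CommRing R] (x : R) (k : ℕ) :
    ∑ j ∈ range (k + 1), (-1) ^ j * (k.choose j : R) * x ^ j = (1 - x) ^ k := by
  rw [sub_eq_neg_add, add_pow]
  refine sum_congr rfl fun j _ => ?_
  rw [one_pow, neg_pow]
  ring

lemma LSeries.term_moebius_two_mul_add_two (j n : ℕ) :
    LSeries.term (fun n => (μ n : ℂ)) (2 * j + 2) n = μ n * ((n : ℂ) ^ 2)⁻¹ ^ (j + 1) := by
  rcases eq_or_ne n 0 with rfl | hn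
  · simp
  have hexp : (2 * j + 2 : ℂ) = ((2 * (j + 1) : ℕ) : ℂ) := by push_cast; ring
  rw [LSeries.term_of_ne_zero hn, hexp, Complex.cpow_natCast, pow_mul, inv_pow, div_eq_mul_inv]

lemma hasSum_moebius_mul_inv_sq_pow (j : ℕ) :
    HasSum (fun n : ℕ => (μ n : ℂ) * ((n : ℂ) ^ 2)⁻¹ ^ (j + 1)) (riemannZeta (2 * j + 2))⁻¹ := by
  have hre : 1 < (2 * j + 2 : ℂ).re := by
    have : (0 : ℝ) ≤ j := j.cast_nonneg
    norm_num
    linarith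
  have hL := LSeries_one_mul_Lseries_moebius hre
  rw [LSeries_one_eq_riemannZeta hre] at hL
  rw [inv_eq_of_mul_eq_one_right hL]
  simpa only [LSeriesHasSum, funext (LSeries.term_moebius_two_mul_add_two j)] using
    (LSeriesSummable_moebius_iff.mpr hre).LSeriesHasSum

lemma hasSum_baezDuarteTerm (k : ℕ) :
    HasSum (fun n => (baezDuarteTerm k n : ℂ)) (baezDuarteC k) := by
  have h := hasSum_sum fun j (_ : j ∈ range (k + 1)) =>
    (hasSum_moebius_mul_inv_sq_pow j).mul_left ((-1) ^ j * (k.choose j : ℂ))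
  have hterm : (fun n => (baezDuarteTerm k n : ℂ)) = fun n =>
      ∑ j ∈ range (k + 1), (-1) ^ j * (k.choose j : ℂ) * (μ n * ((n : ℂ) ^ 2)⁻¹ ^ (j + 1)) := by
    funext n
    push_cast [baezDuarteTerm]
    rw [← sum_range_neg_one_pow_mul_choose_mul_pow, mul_sum]
    exact sum_congr rfl fun j _ => by ring
  simpa only [hterm, baezDuarteC, div_eq_mul_inv] using h

lemma one_sub_pow_le_inv_one_add_mul {x : ℝ} (hx0 : 0 ≤ x) (hx1 : x ≤ 1) (k : ℕ) :
    (1 - x) ^ k ≤ (1 + k * x)⁻¹ :=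
  calc (1 - x) ^ k ≤ Real.exp (-x) ^ k :=
        pow_le_pow_left₀ (by linarith) (Real.one_sub_le_exp_neg x) k
    _ = (Real.exp (k * x))⁻¹ := by rw [← Real.exp_nat_mul, ← Real.exp_neg, neg_mul_eq_mul_neg]
    _ ≤ (1 + k * x)⁻¹ :=
        inv_anti₀ (by positivity) (by linarith [Real.add_one_le_exp (k * x)])

lemma abs_baezDuarteTerm_le (k n : ℕ) : |baezDuarteTerm k n| ≤ ((n : ℝ) ^ 2 + k)⁻¹ := by
  rcases eq_or_ne n 0 with rfl | hn
  · simp [baezDuarteTerm]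
  have hn2 : (1 : ℝ) ≤ (n : ℝ) ^ 2 :=
    one_le_pow₀ (by exact_mod_cast Nat.one_le_iff_ne_zero.mpr hn)
  have hx1 : ((n : ℝ) ^ 2)⁻¹ ≤ 1 := inv_le_one_of_one_le₀ hn2
  have hμ : |(μ n : ℝ)| ≤ 1 := by exact_mod_cast abs_moebius_le_one
  calc |baezDuarteTerm k n|
      = |(μ n : ℝ)| * (((n : ℝ) ^ 2)⁻¹ * (1 - ((n : ℝ) ^ 2)⁻¹) ^ k) := by
        have hx : 0 ≤ ((n : ℝ) ^ 2)⁻¹ * (1 - ((n : ℝ) ^ 2)⁻¹) ^ k := by bound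
        rw [baezDuarteTerm, mul_assoc, abs_mul, abs_of_nonneg hx]
    _ ≤ 1 * (((n : ℝ) ^ 2)⁻¹ * (1 + k * ((n : ℝ) ^ 2)⁻¹)⁻¹) := by
        gcongr
        exact one_sub_pow_le_inv_one_add_mul (by positivity) hx1 k
    _ = ((n : ℝ) ^ 2 + k)⁻¹ := by field_simp

lemma hasSum_inv_mul_add_one {a : ℝ} (ha : 0 < a) :
    HasSum (fun n : ℕ => ((a + n) * (a + n + 1))⁻¹) a⁻¹ := by
  have hpos (n : ℕ) : 0 < a + n := by positivity
  have htelescope (n : ℕ) : ((a + n) * (a + n + 1))⁻¹ = (a + n)⁻¹ - (a + (n + 1 : ℕ))⁻¹ := by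
    have := hpos n
    push_cast
    field_simp
    ring
  rw [hasSum_iff_tendsto_nat_of_nonneg fun n => by have := hpos n; positivity]
  simp only [htelescope, sum_range_sub', Nat.cast_zero, add_zero]
  have hlim : Tendsto (fun n : ℕ => (a + n)⁻¹) atTop (nhds 0) :=
    (tendsto_atTop_add_const_left _ a tendsto_natCast_atTop_atTop).inv_tendsto_atTop
  simpa using tendsto_const_nhds.sub hlim

lemma inv_sq_add_sq_le {s x : ℝ} (hs : 1 / 2 < s) (hx : 0 ≤ x) :
    (x ^ 2 + s ^ 2)⁻¹ ≤ 2 * ((s - 1 / 2 + x) * (s - 1 / 2 + x + 1))⁻¹ := by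
  have hpos : 0 < (s - 1 / 2 + x) * (s - 1 / 2 + x + 1) := by
    apply mul_pos <;> linarith
  rw [← div_eq_mul_inv, le_div_iff₀ hpos, inv_mul_eq_div, div_le_iff₀ (by positivity)]
  nlinarith [sq_nonneg (x - s)]

/-- Unconditionally, `c_k = O(k^{-1/2})`. -/
theorem baez_duarte_unconditional :
    ∃ C : ℝ, 0 < C ∧ ∀ k : ℕ, 1 ≤ k →
      ‖baezDuarteC k‖ ≤ C * (k : ℝ) ^ (-(1 : ℝ) / 2) := by
  refine ⟨4, by norm_num, fun k hk => ?_⟩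
  have hs : 1 ≤ √(k : ℝ) := Real.one_le_sqrt.mpr (by exact_mod_cast hk)
  have hbound (n : ℕ) :
      ‖(baezDuarteTerm k n : ℂ)‖ ≤ 2 * ((√k - 1 / 2 + n) * (√k - 1 / 2 + n + 1))⁻¹ := by
    rw [Complex.norm_real, Real.norm_eq_abs]
    refine (abs_baezDuarteTerm_le k n).trans ?_
    simpa [Real.sq_sqrt] using inv_sq_add_sq_le (s := √k) (x := n) (by linarith) n.cast_nonneg
  calc ‖baezDuarteC k‖ ≤ 2 * (√k - 1 / 2)⁻¹ := by
        rw [← (hasSum_baezDuarteTerm k).tsum_eq]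
        exact tsum_of_norm_bounded ((hasSum_inv_mul_add_one (by linarith)).mul_left 2) hbound
    _ ≤ 4 * (√k)⁻¹ := by
        rw [← div_eq_mul_inv, ← div_eq_mul_inv, div_le_div_iff₀ (by linarith) (by linarith)]
        linarith
    _ = 4 * (k : ℝ) ^ (-(1 : ℝ) / 2) := by
        rw [neg_div, Real.rpow_neg (Nat.cast_nonneg k), Real.sqrt_eq_rpow]
end

section
/- For every complex number s with Re(s) > 0 and 2^(1-s) ≠ 1, the partial sums Σ_{n=1}^{N} (-1)^n · (log n) / n^s converge as N → ∞ to (1 - 2^(1-s)) · ζ'(s) + (log 2) · 2^(1-s) · ζ(s), where ζ' is the derivative of the Riemann zeta function; equivalently, ζ'(s) = -((log 2) · 2^(1-s) / (1 - 2^(1-s))^2) · Σ_{n=1}^{∞} (-1)^(n-1)/n^s + (1/(1 - 2^(1-s))) · Σ_{n=1}^{∞} (-1)^n (log n)/n^s, with both series understood as limits of partial sums. -/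
/-!
Grouping the Dirichlet eta series `η(s) = ∑ (-1)^(n-1) n^(-s)` in pairs
`(2k+1)^(-s) - (2k+2)^(-s)` gives terms of size `O(|s| k^(-re s - 1))` (mean value theorem), so
the grouped series converges locally uniformly on `re s > 0` and can be differentiated termwise.
The derivatives of the pairs are the consecutive pairs of `∑ (-1)^n log n / n^s`, whose terms tend
to `0`, so its partial sums converge to `η'(s)`. For `re s > 1`, splitting `ζ` into even and odd
terms gives `η(s) = (1 - 2^(1-s)) ζ(s)`; by analytic continuation this persists on the connected
set `{re s > 0} \ {1}`, and differentiating the product gives the formula.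
-/

open Finset Filter Topology

theorem tendsto_sum_range_of_hasSum_pairs {E : Type*} [SeminormedAddCommGroup E]
    {f : ℕ → E} {a : E} (hf : Tendsto f atTop (𝓝 0))
    (h : HasSum (fun k => f (2 * k) + f (2 * k + 1)) a) :
    Tendsto (fun N => ∑ n ∈ range N, f n) atTop (𝓝 a) := by
  set P := fun K => ∑ k ∈ range K, (f (2 * k) + f (2 * k + 1))
  have sum_even (K : ℕ) : ∑ n ∈ range (2 * K), f n = P K := by
    induction K with
    | zero => simp [P]
    | succ K ih => simp only [P, mul_add, sum_range_succ, ← ih, add_assoc, mul_one]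
  have tail (N : ℕ) : ‖∑ n ∈ range N, f n - P (N / 2)‖ ≤ ‖f (N - 1)‖ := by
    obtain ⟨K, rfl | rfl⟩ := Nat.even_or_odd' N
    · simp [sum_even]
    · rw [sum_range_succ, sum_even, show (2 * K + 1) / 2 = K by omega]
      simp
  have hP : Tendsto (fun N => P (N / 2)) atTop (𝓝 a) :=
    h.tendsto_sum_nat.comp (Nat.tendsto_div_const_atTop two_ne_zero)
  have htail := squeeze_zero_norm tail
    ((tendsto_norm_zero.comp hf).comp (tendsto_sub_atTop_nat 1))
  simpa using hP.add htail

theorem norm_ofReal_cpow_neg_sub_le {x : ℝ} (hx : 0 < x) {s : ℂ} (hs : -1 ≤ s.re) :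
    ‖(x : ℂ) ^ (-s) - ((x + 1 : ℝ) : ℂ) ^ (-s)‖ ≤ ‖s‖ * x ^ (-s.re - 1) := by
  have hderiv : ∀ t ∈ Set.Icc x (x + 1), HasDerivWithinAt (fun t : ℝ => (t : ℂ) ^ (-s))
      (-s * (t : ℂ) ^ (-s - 1)) (Set.Icc x (x + 1)) t := by
    intro t ht
    have ht0 : 0 < t := hx.trans_le ht.1
    have := ((hasDerivAt_id (t : ℂ)).cpow_const (c := -s) (Or.inl (by simpa using ht0))).comp_ofReal
    simpa using this.hasDerivWithinAt
  have hbound : ∀ t ∈ Set.Ico x (x + 1), ‖-s * (t : ℂ) ^ (-s - 1)‖ ≤ ‖s‖ * x ^ (-s.re - 1) := by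
    intro t ht
    rw [norm_mul, norm_neg, Complex.norm_cpow_eq_rpow_re_of_pos (hx.trans_le ht.1), Complex.sub_re,
      Complex.neg_re, Complex.one_re]
    exact mul_le_mul_of_nonneg_left (Real.rpow_le_rpow_of_nonpos hx ht.1 (by linarith))
      (norm_nonneg s)
  simpa [norm_sub_rev] using norm_image_sub_le_of_norm_deriv_le_segment' hderiv hbound (x + 1)
    (Set.right_mem_Icc.mpr (by linarith))

noncomputable def etaPair (k : ℕ) (s : ℂ) : ℂ := (2 * k + 1 : ℂ) ^ (-s) - (2 * k + 2 : ℂ) ^ (-s)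

/-- The Dirichlet eta function, summed in pairs so that the series converges absolutely on
`0 < re s`; only its values there are meaningful. -/
noncomputable def dirichletEta (s : ℂ) : ℂ := ∑' k, etaPair k s

theorem norm_etaPair_le {ε : ℝ} (hε : -1 ≤ ε) {s : ℂ} (hs : ε ≤ s.re) (k : ℕ) :
    ‖etaPair k s‖ ≤ ‖s‖ * ((2 * k + 1 : ℕ) : ℝ) ^ (-ε - 1) := by
  have hk : (0 : ℝ) < (2 * k + 1 : ℕ) := by positivity
  calc ‖etaPair k s‖ ≤ ‖s‖ * ((2 * k + 1 : ℕ) : ℝ) ^ (-s.re - 1) := by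
        convert norm_ofReal_cpow_neg_sub_le hk (hε.trans hs) using 4
        rw [etaPair]
        push_cast
        ring_nf
    _ ≤ ‖s‖ * ((2 * k + 1 : ℕ) : ℝ) ^ (-ε - 1) := by
        gcongr
        exact_mod_cast Nat.le_add_left 1 _

theorem differentiable_etaPair (k : ℕ) : Differentiable ℂ (etaPair k) := by
  have h1 : (2 * k + 1 : ℂ) ≠ 0 := by norm_cast
  have h2 : (2 * k + 2 : ℂ) ≠ 0 := by norm_cast
  exact (differentiable_neg.const_cpow (Or.inl h1)).sub (differentiable_neg.const_cpow (Or.inl h2))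

theorem exists_summable_bound_etaPair {s : ℂ} (hs : 0 < s.re) :
    ∃ U, IsOpen U ∧ s ∈ U ∧ ∃ u : ℕ → ℝ, Summable u ∧ ∀ k, ∀ w ∈ U, ‖etaPair k w‖ ≤ u k := by
  refine ⟨{w | s.re / 2 < w.re ∧ ‖w‖ < ‖s‖ + 1}, ?_, ⟨by linarith, by linarith⟩,
    fun k => (‖s‖ + 1) * ((2 * k + 1 : ℕ) : ℝ) ^ (-(s.re / 2) - 1), ?_, ?_⟩
  · exact (isOpen_lt continuous_const Complex.continuous_re).inter
      (isOpen_lt continuous_norm continuous_const)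
  · have := (Real.summable_nat_rpow.mpr (by linarith : -(s.re / 2) - 1 < -1)).comp_injective
      (fun a b (h : 2 * a + 1 = 2 * b + 1) => by omega)
    exact this.mul_left _
  · intro k w ⟨hre, hnorm⟩
    exact (norm_etaPair_le (by linarith) hre.le k).trans
      (mul_le_mul_of_nonneg_right hnorm.le (by positivity))

theorem differentiableAt_dirichletEta {s : ℂ} (hs : 0 < s.re) :
    DifferentiableAt ℂ dirichletEta s := by
  obtain ⟨U, hU, hsU, u, hu, hbound⟩ := exists_summable_bound_etaPair hs
  exact (Complex.differentiableOn_tsum_of_summable_norm hu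
    (fun k => (differentiable_etaPair k).differentiableOn) hU hbound).differentiableAt
    (hU.mem_nhds hsU)

theorem hasSum_deriv_etaPair {s : ℂ} (hs : 0 < s.re) :
    HasSum (fun k => deriv (etaPair k) s) (deriv dirichletEta s) := by
  obtain ⟨U, hU, hsU, u, hu, hbound⟩ := exists_summable_bound_etaPair hs
  exact Complex.hasSum_deriv_of_summable_norm hu
    (fun k => (differentiable_etaPair k).differentiableOn) hU hbound hsU

noncomputable def etaDerivTerm (s : ℂ) (n : ℕ) : ℂ :=
  (-1) ^ (n + 1) * Complex.log ((n : ℂ) + 1) / ((n : ℂ) + 1) ^ s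

theorem hasDerivAt_const_cpow_neg {c : ℂ} (hc : c ≠ 0) (s : ℂ) :
    HasDerivAt (fun w => c ^ (-w)) (-(Complex.log c / c ^ s)) s := by
  convert (hasDerivAt_neg s).const_cpow (c := c) (Or.inl hc) using 1
  rw [Complex.cpow_neg]
  ring

theorem deriv_etaPair (k : ℕ) (s : ℂ) :
    deriv (etaPair k) s = etaDerivTerm s (2 * k) + etaDerivTerm s (2 * k + 1) := by
  have h1 : (2 * k + 1 : ℂ) ≠ 0 := by norm_cast
  have h2 : (2 * k + 2 : ℂ) ≠ 0 := by norm_cast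
  have hderiv : HasDerivAt (etaPair k) _ s :=
    (hasDerivAt_const_cpow_neg h1 s).sub (hasDerivAt_const_cpow_neg h2 s)
  rw [hderiv.deriv]
  simp only [etaDerivTerm, pow_succ, pow_mul]
  push_cast
  ring_nf

theorem tendsto_etaDerivTerm_zero {s : ℂ} (hs : 0 < s.re) :
    Tendsto (etaDerivTerm s) atTop (𝓝 0) := by
  have hlog : Tendsto (fun x : ℝ => Real.log x / x ^ s.re) atTop (𝓝 0) :=
    (isLittleO_log_rpow_atTop hs).tendsto_div_nhds_zero
  refine squeeze_zero_norm (fun n => le_of_eq ?_)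
    (hlog.comp (tendsto_natCast_atTop_atTop.comp (tendsto_add_atTop_nat 1)))
  have hcast : (n : ℂ) + 1 = ((n + 1 : ℕ) : ℂ) := by push_cast; rfl
  rw [etaDerivTerm, norm_div, norm_mul, norm_pow, norm_neg, norm_one, one_pow, one_mul, hcast,
    ← Complex.natCast_log, Complex.norm_real, Real.norm_of_nonneg (Real.log_natCast_nonneg _),
    Complex.norm_natCast_cpow_of_pos n.succ_pos]
  rfl

theorem dirichletEta_eq_of_one_lt_re {s : ℂ} (hs : 1 < s.re) :
    dirichletEta s = (1 - 2 ^ (1 - s)) * riemannZeta s := by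
  set g : ℕ → ℂ := fun n => 1 / (n + 1 : ℂ) ^ s
  have hg : Summable g := by
    simpa [g] using (summable_nat_add_iff 1).mpr (Complex.summable_one_div_nat_cpow.mpr hs)
  have hg_even : Summable fun k => g (2 * k) := hg.comp_injective fun a b h => by simpa using h
  have hg_odd : Summable fun k => g (2 * k + 1) := hg.comp_injective fun a b h => by simpa using h
  have hζ : riemannZeta s = ∑' k, g (2 * k) + ∑' k, g (2 * k + 1) := by
    rw [tsum_even_add_odd hg_even hg_odd, zeta_eq_tsum_one_div_nat_add_one_cpow hs]
  have hodd : ∑' k, g (2 * k + 1) = 2 ^ (-s) * riemannZeta s := by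
    rw [zeta_eq_tsum_one_div_nat_add_one_cpow hs, ← tsum_mul_left]
    refine tsum_congr fun k => ?_
    have : ((2 * k + 1 : ℕ) : ℂ) + 1 = ((2 : ℕ) : ℂ) * ((k + 1 : ℕ) : ℂ) := by push_cast; ring
    simp only [g, this, Complex.natCast_mul_natCast_cpow, Complex.cpow_neg]
    push_cast
    field_simp
  have hpair : dirichletEta s = ∑' k, g (2 * k) - ∑' k, g (2 * k + 1) := by
    rw [← hg_even.tsum_sub hg_odd]
    refine tsum_congr fun k => ?_
    simp only [etaPair, g, Complex.cpow_neg, one_div]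
    push_cast
    ring_nf
  have h2 : (2 : ℂ) ^ (1 - s) = 2 * 2 ^ (-s) := by
    rw [sub_eq_add_neg, Complex.cpow_add _ _ two_ne_zero, Complex.cpow_one]
  rw [hpair, h2]
  linear_combination -hζ - 2 * hodd

theorem isPreconnected_re_pos_diff_one : IsPreconnected ({z : ℂ | 0 < z.re} \ {1}) := by
  have hA := (convex_halfSpace_re_gt 0).inter (convex_halfSpace_im_gt 0)
  have hB := (convex_halfSpace_re_gt 0).inter (convex_halfSpace_re_lt 1)
  have hC := (convex_halfSpace_re_gt 0).inter (convex_halfSpace_im_lt 0)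
  have hD := convex_halfSpace_re_gt 1
  have hAB := hA.isPreconnected.union (1 / 2 + Complex.I) (by simp) (by norm_num) hB.isPreconnected
  have hCD := hC.isPreconnected.union (2 - Complex.I) (by simp) (by norm_num) hD.isPreconnected
  convert hAB.union (1 / 2 - Complex.I) (by norm_num) (by simp) hCD using 1
  ext z
  simp only [Set.mem_sdiff, Set.mem_ofPred_eq, Set.mem_singleton_iff, Set.mem_union,
    Set.mem_inter_iff, Complex.ext_iff, Complex.one_re, Complex.one_im]
  grind

theorem hasDerivAt_one_sub_two_cpow_mul_riemannZeta {s : ℂ} (hs : s ≠ 1) :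
    HasDerivAt (fun w => (1 - 2 ^ (1 - w)) * riemannZeta w)
      ((1 - 2 ^ (1 - s)) * deriv riemannZeta s +
        (Real.log 2 : ℂ) * 2 ^ (1 - s) * riemannZeta s) s := by
  have htwo : HasDerivAt (fun w : ℂ => (2 : ℂ) ^ (1 - w)) (2 ^ (1 - s) * Complex.log 2 * -1) s :=
    ((hasDerivAt_id s).const_sub 1).const_cpow (Or.inl two_ne_zero)
  refine (((hasDerivAt_const s 1).sub htwo).mul
    (differentiableAt_riemannZeta hs).hasDerivAt).congr_deriv ?_
  rw [Complex.ofReal_log zero_le_two, Complex.ofReal_ofNat, Pi.sub_apply]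
  ring

theorem dirichletEta_eventuallyEq {s : ℂ} (hs : 0 < s.re) (hs1 : s ≠ 1) :
    dirichletEta =ᶠ[𝓝 s] fun w => (1 - 2 ^ (1 - w)) * riemannZeta w := by
  have hre : IsOpen {z : ℂ | 0 < z.re} := isOpen_lt continuous_const Complex.continuous_re
  have hU : IsOpen ({z : ℂ | 0 < z.re} \ {1}) := hre.sdiff isClosed_singleton
  have hη : AnalyticOnNhd ℂ dirichletEta ({z : ℂ | 0 < z.re} \ {1}) :=
    DifferentiableOn.analyticOnNhd
      (fun z hz => (differentiableAt_dirichletEta hz.1).differentiableWithinAt) hU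
  have hζ : AnalyticOnNhd ℂ (fun w => (1 - 2 ^ (1 - w)) * riemannZeta w)
      ({z : ℂ | 0 < z.re} \ {1}) :=
    DifferentiableOn.analyticOnNhd (fun z hz =>
      (hasDerivAt_one_sub_two_cpow_mul_riemannZeta hz.2).differentiableAt.differentiableWithinAt) hU
  have heq_two : dirichletEta =ᶠ[𝓝 2] fun w => (1 - 2 ^ (1 - w)) * riemannZeta w := by
    filter_upwards [(isOpen_lt continuous_const Complex.continuous_re).mem_nhds
      (show (1 : ℝ) < (2 : ℂ).re by norm_num)] with w hw using dirichletEta_eq_of_one_lt_re hw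
  exact (hη.eqOn_of_preconnected_of_eventuallyEq hζ isPreconnected_re_pos_diff_one
    (by norm_num) heq_two).eventuallyEq_of_mem (hU.mem_nhds ⟨hs, hs1⟩)

theorem deriv_dirichletEta {s : ℂ} (hs : 0 < s.re) (hs1 : s ≠ 1) :
    deriv dirichletEta s = (1 - 2 ^ (1 - s)) * deriv riemannZeta s +
      (Real.log 2 : ℂ) * 2 ^ (1 - s) * riemannZeta s :=
  (dirichletEta_eventuallyEq hs hs1).deriv_eq.trans
    (hasDerivAt_one_sub_two_cpow_mul_riemannZeta hs1).deriv

/-- For `Re(s) > 0` with `2^(1-s) ≠ 1`, termwise differentiation of the eta series: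
`∑_{n=1}^{∞} (-1)^n (log n)/n^s = (1 - 2^(1-s)) ζ'(s) + (log 2) 2^(1-s) ζ(s)`. -/
theorem eta_series_deriv_zeta (s : ℂ) (hs : 0 < s.re) (h2 : (2 : ℂ) ^ (1 - s) ≠ 1) :
    Tendsto (fun N : ℕ => ∑ n ∈ Finset.range N,
        (-1) ^ (n + 1) * Complex.log ((n : ℂ) + 1) / ((n : ℂ) + 1) ^ s)
      atTop
      (nhds ((1 - 2 ^ (1 - s)) * deriv riemannZeta s +
        (Real.log 2 : ℂ) * 2 ^ (1 - s) * riemannZeta s)) := by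
  have hs1 : s ≠ 1 := by
    rintro rfl
    simp at h2
  have hpairs := hasSum_deriv_etaPair hs
  simp only [deriv_etaPair, deriv_dirichletEta hs hs1] at hpairs
  exact tendsto_sum_range_of_hasSum_pairs (tendsto_etaDerivTerm_zero hs) hpairs
end
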